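/- arXiv:2409.08241 — 2 statements merged into one kernel-verified Lean document; each statement's English description precedes it below -/
import Mathlib

section
/- Let ℓ ≥ 3 be an integer and let S be an ℓ-sparse finite collection of bundles of Fin m. Then: (i) for every bundle X ⊆ Fin m, v_S^ℓ(X) + v_S^ℓ(Xᶜ) = ℓ; and (ii) for every nonempty member S ∈ S, v_S^ℓ(S) = 1 and v_S^ℓ(Sᶜ) = ℓ − 1. -/
/-- A collection of bundles of `Fin m`, indexed by `ι`, is `ℓ`-sparse if the union of any
`ℓ - 1` (not necessarily distinct) members is not all of `Fin m`. -/
def Sparse (m ℓ : ℕ) {ι : Type*} (S : ι → Finset (Fin m)) : Prop :=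
  ∀ g : Fin (ℓ - 1) → ι,
    (Finset.univ.sup fun t => S (g t)) ≠ (Finset.univ : Finset (Fin m))

/-- The cover number `σ_S(X)`: the least number of members of the collection `S` needed to
cover `X`, if `X` is contained in the union of all members, and `max ℓ d` otherwise (where
`d` is the number of members). -/
noncomputable def coverNum (m ℓ : ℕ) {ι : Type*} [Fintype ι]
    (S : ι → Finset (Fin m)) (X : Finset (Fin m)) : ℕ :=
  if X ⊆ Finset.univ.sup S then
    sInf {n | ∃ Y : Finset ι, X ⊆ Y.sup S ∧ Y.card = n}
  else max ℓ (Fintype.card ι)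

/-- The modified set-cover valuation `v_S^ℓ`. -/
noncomputable def vSl (m ℓ : ℕ) {ι : Type*} [Fintype ι]
    (S : ι → Finset (Fin m)) (X : Finset (Fin m)) : ℝ :=
  if (coverNum m ℓ S X : ℝ) < (ℓ : ℝ) / 2 then (coverNum m ℓ S X : ℝ)
  else if (coverNum m ℓ S Xᶜ : ℝ) < (ℓ : ℝ) / 2 then (ℓ : ℝ) - (coverNum m ℓ S Xᶜ : ℝ)
  else (ℓ : ℝ) / 2

/-!
Write `σ` for the cover number. If `σ(X) + σ(Xᶜ) < ℓ`, both `X` and `Xᶜ` have optimal covers,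
and their union is a cover of everything by at most `ℓ - 1` members, which sparseness forbids.
So `σ(X) + σ(Xᶜ) ≥ ℓ`, and under this inequality the three cases defining `v` pair off so that
`v(X) + v(Xᶜ) = ℓ`. A nonempty member has cover number `1 < ℓ / 2`, hence value `1`.
-/

open Finset

variable {m ℓ : ℕ} {ι : Type*}

theorem Sparse.lt_card_of_univ_subset {S : ι → Finset (Fin m)} (hS : Sparse m ℓ S)
    (hm : 0 < m) {Y : Finset ι} (hY : univ ⊆ Y.sup S) : ℓ - 1 < #Y := by
  classical
  by_contra! hcard
  have : Nonempty (Fin #Y) := by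
    obtain ⟨i, hi, -⟩ := mem_sup.mp (hY (mem_univ ⟨0, hm⟩))
    exact ⟨Y.equivFin ⟨i, hi⟩⟩
  -- a surjection `Fin (ℓ - 1) → Y` lists the members of `Y` with repetitions
  set g : Fin (ℓ - 1) → ι := fun t => Y.equivFin.symm (Function.invFun (Fin.castLE hcard) t)
  have hg : univ.image g = Y := by
    ext i
    refine ⟨fun hi => ?_, fun hi => ?_⟩
    · obtain ⟨t, -, rfl⟩ := mem_image.mp hi
      exact Subtype.prop _
    · obtain ⟨t, ht⟩ := Function.invFun_surjective (Fin.castLE_injective hcard)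
        (Y.equivFin ⟨i, hi⟩)
      exact mem_image.mpr ⟨t, mem_univ t, by simp [g, ht]⟩
  apply hS g
  rw [← Function.comp_def, ← sup_image, hg]
  exact univ_subset_iff.mp hY

section Fintype

variable [Fintype ι] {S : ι → Finset (Fin m)} {X : Finset (Fin m)}

theorem coverNum_le_card {Y : Finset ι} (hY : X ⊆ Y.sup S) : coverNum m ℓ S X ≤ #Y := by
  have hX : X ⊆ univ.sup S := hY.trans (sup_mono (subset_univ Y))
  rw [coverNum, if_pos hX]
  exact Nat.sInf_le ⟨Y, hY, rfl⟩

theorem exists_card_eq_coverNum_of_coverNum_lt (h : coverNum m ℓ S X < ℓ) :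
    ∃ Y : Finset ι, X ⊆ Y.sup S ∧ #Y = coverNum m ℓ S X := by
  unfold coverNum at h ⊢
  split_ifs at h ⊢ with hX
  · exact Nat.sInf_mem (s := {n | ∃ Y : Finset ι, X ⊆ Y.sup S ∧ #Y = n}) ⟨_, univ, hX, rfl⟩
  · exact absurd h (not_lt.mpr (le_max_left _ _))

theorem coverNum_pos (hX : X.Nonempty) (hℓ : 0 < ℓ) : 0 < coverNum m ℓ S X := by
  by_contra! h0
  obtain ⟨Y, hY, hcard⟩ :=
    exists_card_eq_coverNum_of_coverNum_lt (ℓ := ℓ) (S := S) (X := X) (by omega)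
  rw [Nat.le_zero.mp h0, card_eq_zero] at hcard
  rw [hcard, sup_empty] at hY
  exact hX.ne_empty (subset_empty.mp hY)

theorem coverNum_eq_one_of_nonempty (i : ι) (hi : (S i).Nonempty) (hℓ : 0 < ℓ) :
    coverNum m ℓ S (S i) = 1 := by
  have hle : coverNum m ℓ S (S i) ≤ #{i} := coverNum_le_card (by simp)
  have hpos := coverNum_pos (S := S) hi hℓ
  rw [card_singleton] at hle
  omega

theorem Sparse.le_coverNum_add_compl (hS : Sparse m ℓ S) (hm : 0 < m) (X : Finset (Fin m)) :
    ℓ ≤ coverNum m ℓ S X + coverNum m ℓ S Xᶜ := by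
  classical
  by_contra! hsum
  obtain ⟨Y₁, hY₁, hc₁⟩ := exists_card_eq_coverNum_of_coverNum_lt (ℓ := ℓ) (S := S) (X := X)
    (by omega)
  obtain ⟨Y₂, hY₂, hc₂⟩ := exists_card_eq_coverNum_of_coverNum_lt (ℓ := ℓ) (S := S) (X := Xᶜ)
    (by omega)
  have hcover : univ ⊆ (Y₁ ∪ Y₂).sup S := by
    rw [sup_union, ← union_compl X]
    exact sup_le_sup hY₁ hY₂
  have := hS.lt_card_of_univ_subset hm hcover
  have := card_union_le Y₁ Y₂
  omega

theorem vSl_of_coverNum_lt (h : (coverNum m ℓ S X : ℝ) < ℓ / 2) :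
    vSl m ℓ S X = coverNum m ℓ S X := by
  rw [vSl, if_pos h]

theorem vSl_add_vSl_compl (h : ℓ ≤ coverNum m ℓ S X + coverNum m ℓ S Xᶜ) :
    vSl m ℓ S X + vSl m ℓ S Xᶜ = ℓ := by
  have h' : (ℓ : ℝ) ≤ coverNum m ℓ S X + coverNum m ℓ S Xᶜ := by exact_mod_cast h
  unfold vSl
  rw [compl_compl]
  split_ifs <;> linarith

end Fintype

/-- For an `ℓ`-sparse finite collection `S` of bundles of `Fin m` with `ℓ ≥ 3`:
(i) `v_S^ℓ(X) + v_S^ℓ(Xᶜ) = ℓ` for every bundle `X`; and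
(ii) `v_S^ℓ(S_i) = 1` and `v_S^ℓ((S_i)ᶜ) = ℓ − 1` for every nonempty member `S_i` of `S`. -/
theorem vSl_add_compl_and_members
    (m ℓ d : ℕ) (hm : 0 < m) (hℓ : 3 ≤ ℓ)
    (S : Fin d → Finset (Fin m)) (hS : Sparse m ℓ S) :
    (∀ X : Finset (Fin m), vSl m ℓ S X + vSl m ℓ S Xᶜ = (ℓ : ℝ)) ∧
    (∀ i : Fin d, (S i).Nonempty →
      vSl m ℓ S (S i) = 1 ∧ vSl m ℓ S ((S i)ᶜ) = (ℓ : ℝ) - 1) := by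
  have hcompl X : vSl m ℓ S X + vSl m ℓ S Xᶜ = ℓ :=
    vSl_add_vSl_compl (hS.le_coverNum_add_compl hm X)
  refine ⟨hcompl, fun i hi => ?_⟩
  have hcov : coverNum m ℓ S (S i) = 1 := coverNum_eq_one_of_nonempty i hi (by omega)
  have hℓR : (3 : ℝ) ≤ ℓ := by exact_mod_cast hℓ
  have hmem : vSl m ℓ S (S i) = 1 := by
    rw [vSl_of_coverNum_lt (by rw [hcov]; push_cast; linarith), hcov, Nat.cast_one]
  exact ⟨hmem, by linarith [hcompl (S i)]⟩
end

section
/- Let 0 < α ≤ 1 and ε > 0, let S be a nonempty bundle of Fin m, and let v₂ ∈ V₂ be a normalized monotone valuation. Define the single-minded valuations u by u(X) = (1/α)·v₂(Fin m) − v₂(Sᶜ) + ε if S ⊆ X and 0 otherwise, and l by l(X) = max{α·v₂(Fin m) − v₂(Sᶜ) − ε, 0} if S ⊆ X and 0 otherwise, and suppose u, l ∈ V₁. Let (f, p₁, p₂) be a truthful two-bidder auction rule over V₁ × V₂ that gives an α-approximation to the optimal welfare, and suppose M : Finset (Fin m) → ℝ is nondecreasing and is a menu for bidder 1 at v₂.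 Then (1/α)·v₂(Fin m) − v₂(Sᶜ) + ε ≥ M(S) − M(∅) ≥ α·v₂(Fin m) − v₂(Sᶜ) − ε. -/
/-!
Both bounds compare the menu with a single-minded bidder 1 who wants `S`. If bidder 1 values `S`
at `u S`, then giving `S` away would leave welfare at most `v₂ univ < α * (u S + v₂ Sᶜ)`, so the
mechanism must hand `S` to bidder 1; preferring that bundle to `∅` caps `M S - M ∅` by `u S`.
If bidder 1 values `S` at `l S > 0`, then giving `S` to bidder 1 yields welfare at most
`l S + v₂ Sᶜ < α * v₂ univ`, so bidder 1 does not get `S`; preferring the (worthless) bundle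
received to `S` forces `M S - M ∅ ≥ l S`.
-/

open Finset

variable {ι : Type*} [DecidableEq ι]

def singleMinded (S : Finset ι) (c : ℝ) (X : Finset ι) : ℝ := if S ⊆ X then c else 0

section Menu

variable {S A : Finset ι} {c : ℝ} {M : Finset ι → ℝ}

theorem menu_gap_le_of_subset (hS : S.Nonempty) (hM : Monotone M) (hA : S ⊆ A)
    (hbest : ∀ X, singleMinded S c X - M X ≤ singleMinded S c A - M A) :
    M S - M ∅ ≤ c := by
  have h := hbest ∅
  have hSe : ¬ S ⊆ ∅ := by simpa [subset_empty] using hS.ne_empty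
  simp only [singleMinded, hA, hSe, if_true, if_false] at h
  linarith [hM hA]

theorem le_menu_gap_of_not_subset (hM : Monotone M) (hA : ¬ S ⊆ A)
    (hbest : ∀ X, singleMinded S c X - M X ≤ singleMinded S c A - M A) :
    c ≤ M S - M ∅ := by
  have h := hbest S
  simp only [singleMinded, hA, subset_refl, if_true, if_false] at h
  linarith [hM (empty_subset A)]

end Menu

section Welfare

variable [Fintype ι] {S A B : Finset ι} {c α : ℝ} {v : Finset ι → ℝ}

theorem subset_of_approx_singleMinded (hv : Monotone v)
    (happ : α * (singleMinded S c S + v Sᶜ) ≤ singleMinded S c A + v B)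
    (hgt : v univ < α * (c + v Sᶜ)) : S ⊆ A := by
  by_contra hA
  simp only [singleMinded, hA, subset_refl, if_true, if_false] at happ
  linarith [hv (subset_univ B)]

theorem not_subset_of_approx_singleMinded (hv : Monotone v) (hS : S.Nonempty)
    (hAB : Disjoint A B)
    (happ : α * (singleMinded S c ∅ + v univ) ≤ singleMinded S c A + v B)
    (hlt : c + v Sᶜ < α * v univ) : ¬ S ⊆ A := by
  intro hA
  have hB : B ⊆ Sᶜ := fun x hx => mem_compl.2 fun hxS => disjoint_left.1 hAB (hA hxS) hx
  have hSe : ¬ S ⊆ ∅ := by simpa [subset_empty] using hS.ne_empty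
  simp only [singleMinded, hA, hSe, if_true, if_false, zero_add] at happ
  linarith [hv hB]

end Welfare

theorem menu_price_bounds_general
    (m : ℕ) (α ε : ℝ) (hα0 : 0 < α) (hε : 0 < ε)
    (S : Finset (Fin m)) (hS : S.Nonempty)
    (V₁ V₂ : Set (Finset (Fin m) → ℝ))
    (v₂ : Finset (Fin m) → ℝ) (hv₂ : v₂ ∈ V₂)
    (hv₂mono : ∀ X Y : Finset (Fin m), X ⊆ Y → v₂ X ≤ v₂ Y)
    (u l : Finset (Fin m) → ℝ)
    (hu : ∀ X : Finset (Fin m),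
      u X = if S ⊆ X then 1 / α * v₂ (Finset.univ : Finset (Fin m)) - v₂ Sᶜ + ε else 0)
    (hl : ∀ X : Finset (Fin m),
      l X = if S ⊆ X then
        max (α * v₂ (Finset.univ : Finset (Fin m)) - v₂ Sᶜ - ε) 0 else 0)
    (huV : u ∈ V₁) (hlV : l ∈ V₁)
    (f : (Finset (Fin m) → ℝ) → (Finset (Fin m) → ℝ) → Finset (Fin m) × Finset (Fin m))
    (p₁ : (Finset (Fin m) → ℝ) → (Finset (Fin m) → ℝ) → ℝ)
    (hdisj : ∀ w₁ ∈ V₁, ∀ w₂ ∈ V₂, Disjoint (f w₁ w₂).1 (f w₁ w₂).2)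
    (happrox : ∀ w₁ ∈ V₁, ∀ w₂ ∈ V₂, ∀ A B : Finset (Fin m), Disjoint A B →
      α * (w₁ A + w₂ B) ≤ w₁ (f w₁ w₂).1 + w₂ (f w₁ w₂).2)
    (M : Finset (Fin m) → ℝ)
    (hMmono : ∀ X Y : Finset (Fin m), X ⊆ Y → M X ≤ M Y)
    (hmenu : ∀ w₁ ∈ V₁, p₁ w₁ v₂ = M (f w₁ v₂).1 ∧
      ∀ X : Finset (Fin m), w₁ (f w₁ v₂).1 - M (f w₁ v₂).1 ≥ w₁ X - M X) :
    M S - M ∅ ≤ 1 / α * v₂ (Finset.univ : Finset (Fin m)) - v₂ Sᶜ + ε ∧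
    α * v₂ (Finset.univ : Finset (Fin m)) - v₂ Sᶜ - ε ≤ M S - M ∅ := by
  have hv : Monotone v₂ := fun X Y h => hv₂mono X Y h
  have hM : Monotone M := fun X Y h => hMmono X Y h
  obtain rfl : u = singleMinded S _ := funext hu
  obtain rfl : l = singleMinded S _ := funext hl
  constructor
  · have hgt : v₂ univ < α * ((1 / α * v₂ univ - v₂ Sᶜ + ε) + v₂ Sᶜ) := by
      field_simp
      linarith [mul_pos hα0 hε]
    have hA := subset_of_approx_singleMinded hv
      (happrox _ huV v₂ hv₂ S Sᶜ disjoint_compl_right) hgt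
    exact menu_gap_le_of_subset hS hM hA (hmenu _ huV).2
  · rcases le_or_gt (α * v₂ univ - v₂ Sᶜ - ε) 0 with hc | hc
    · linarith [hM (empty_subset S)]
    have hA := not_subset_of_approx_singleMinded hv hS (hdisj _ hlV v₂ hv₂)
      (happrox _ hlV v₂ hv₂ ∅ univ (disjoint_empty_left _))
      (by rw [max_eq_left hc.le]; linarith)
    exact (le_max_left _ _).trans (le_menu_gap_of_not_subset hM hA (hmenu _ hlV).2)

/-- Bounds on the menu prices of any truthful two-bidder `α`-approximation mechanism whose
class for bidder 1 contains the single-minded valuations `u` and `l` built from `v₂`. -/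
theorem menu_price_bounds
    (m : ℕ) (α ε : ℝ) (hα0 : 0 < α) (hα1 : α ≤ 1) (hε : 0 < ε)
    (S : Finset (Fin m)) (hS : S.Nonempty)
    (V₁ V₂ : Set (Finset (Fin m) → ℝ))
    (v₂ : Finset (Fin m) → ℝ) (hv₂ : v₂ ∈ V₂)
    (hv₂norm : v₂ ∅ = 0) (hv₂mono : ∀ X Y : Finset (Fin m), X ⊆ Y → v₂ X ≤ v₂ Y)
    (u l : Finset (Fin m) → ℝ)
    (hu : ∀ X : Finset (Fin m),
      u X = if S ⊆ X then 1 / α * v₂ (Finset.univ : Finset (Fin m)) - v₂ Sᶜ + ε else 0)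
    (hl : ∀ X : Finset (Fin m),
      l X = if S ⊆ X then
        max (α * v₂ (Finset.univ : Finset (Fin m)) - v₂ Sᶜ - ε) 0 else 0)
    (huV : u ∈ V₁) (hlV : l ∈ V₁)
    (f : (Finset (Fin m) → ℝ) → (Finset (Fin m) → ℝ) → Finset (Fin m) × Finset (Fin m))
    (p₁ p₂ : (Finset (Fin m) → ℝ) → (Finset (Fin m) → ℝ) → ℝ)
    (hdisj : ∀ w₁ ∈ V₁, ∀ w₂ ∈ V₂, Disjoint (f w₁ w₂).1 (f w₁ w₂).2)
    (htruth₁ : ∀ w₁ ∈ V₁, ∀ w₂ ∈ V₂, ∀ w₁' ∈ V₁,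
      w₁ (f w₁ w₂).1 - p₁ w₁ w₂ ≥ w₁ (f w₁' w₂).1 - p₁ w₁' w₂)
    (htruth₂ : ∀ w₁ ∈ V₁, ∀ w₂ ∈ V₂, ∀ w₂' ∈ V₂,
      w₂ (f w₁ w₂).2 - p₂ w₁ w₂ ≥ w₂ (f w₁ w₂').2 - p₂ w₁ w₂')
    (happrox : ∀ w₁ ∈ V₁, ∀ w₂ ∈ V₂, ∀ A B : Finset (Fin m), Disjoint A B →
      α * (w₁ A + w₂ B) ≤ w₁ (f w₁ w₂).1 + w₂ (f w₁ w₂).2)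
    (M : Finset (Fin m) → ℝ)
    (hMmono : ∀ X Y : Finset (Fin m), X ⊆ Y → M X ≤ M Y)
    (hmenu : ∀ w₁ ∈ V₁, p₁ w₁ v₂ = M (f w₁ v₂).1 ∧
      ∀ X : Finset (Fin m), w₁ (f w₁ v₂).1 - M (f w₁ v₂).1 ≥ w₁ X - M X) :
    M S - M ∅ ≤ 1 / α * v₂ (Finset.univ : Finset (Fin m)) - v₂ Sᶜ + ε ∧
    α * v₂ (Finset.univ : Finset (Fin m)) - v₂ Sᶜ - ε ≤ M S - M ∅ :=
  menu_price_bounds_general m α ε hα0 hε S hS V₁ V₂ v₂ hv₂ hv₂mono u l hu hl huV hlV f p₁ hdisj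
    happrox M hMmono hmenu
end
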